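/- Let A be a finite alphabet with a map to a group G whose image generates G as a semigroup, let L ⊆ A* be accepted by a finite automaton with n states, and suppose every element of G has only finitely many representatives in L. Let k ≥ 0, let B be the number of elements of G at word-metric distance at most k from the identity, and suppose w₂ ∈ A* lies in L and t, t' are integers with t < t' ≤ |w₂| such that the subpath of w₂ from time t to time t' stays within word-metric distance k of a fixed group element. If this subpath visits some group element more than n times with the automaton in the same state at two of those visits having equal group-element value, then L contains infinitely many representatives of π(w₂); consequently, for any w₂ ∈ L the length of any subsegment of w₂ whose path stays in a ball of radius k is less than n·B. -/

import Mathlib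

/-- The evaluation of a word over the alphabet `A` in the group `G`, via the letter map `φ`;
this is the monoid homomorphism `π : A* → G`. -/
def evalWord {A G : Type*} [Group G] (φ : A → G) (w : List A) : G := (w.map φ).prod

/-- The word metric on `G` relative to the letter map `φ : A → G`:
`d(g,h)` is the least length of a word `u` with `π(u) = g⁻¹h`. -/
noncomputable def wordDist {A G : Type*} [Group G] (φ : A → G) (g h : G) : ℕ :=
  sInf {n | ∃ u : List A, u.length = n ∧ evalWord φ u = g⁻¹ * h}

/-- The synchronous uniform distance between two words: the maximum over `n` of the
word-metric distance between the values of the length-`n` prefixes. -/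
noncomputable def unifDist {A G : Type*} [Group G] (φ : A → G) (w₁ w₂ : List A) : ℕ :=
  sSup {m | ∃ n : ℕ, m = wordDist φ (evalWord φ (w₁.take n)) (evalWord φ (w₂.take n))}

/-- The formal inverse of a word: reverse it and invert each letter via `ι`. -/
def wordInv {A : Type*} (ι : A → A) (w : List A) : List A := w.reverse.map ι

/-- `(A, L)` is an automatic structure for the group `G` (with letter map `φ`):
`L` is regular, maps onto `G`, and satisfies the one-sided fellow traveller property. -/
def IsAutomaticStructure {A G : Type*} [Group G] (φ : A → G) (L : Language A) : Prop :=
  L.IsRegular ∧ (∀ g : G, ∃ w ∈ L, evalWord φ w = g) ∧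
    ∃ k : ℕ, ∀ w₁ ∈ L, ∀ w₂ ∈ L, ∀ a : Option A,
      evalWord φ (w₁ ++ a.toList) = evalWord φ w₂ →
        unifDist φ (w₁ ++ a.toList) w₂ ≤ k

/-- `(A, L)` is a biautomatic structure: both `(A, L)` and `(A, L⁻¹)` are automatic. -/
def IsBiautomaticStructure {A G : Type*} [Group G] (φ : A → G) (ι : A → A)
    (L : Language A) : Prop :=
  IsAutomaticStructure φ L ∧
    IsAutomaticStructure φ ((wordInv ι '' (L : Set (List A)) : Set (List A)) : Language A)

/-! If, after a nonempty subword `y` of an accepted word, both the automaton and the group path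
are back where they were, then `y` can be pumped: each power of `y` gives another accepted word with
the same value. A ball of radius `k` has `B` elements, so a subpath of length at least `n·B` inside
it visits more times than there are (element, state) pairs, and pigeonhole produces such a loop. -/

section Pumping

variable {A G : Type*} [Group G] (φ : A → G)

@[simp]
lemma evalWord_append (u v : List A) :
    evalWord φ (u ++ v) = evalWord φ u * evalWord φ v := by
  simp [evalWord]

lemma evalWord_flatten_replicate {y : List A} (hy : evalWord φ y = 1) (m : ℕ) :
    evalWord φ (List.replicate m y).flatten = 1 := by
  induction m with
  | zero => rfl
  | succ m ih => simp [List.replicate_succ, hy, ih]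

lemma wordDist_one_inv_mul (g h : G) : wordDist φ 1 (g⁻¹ * h) = wordDist φ g h := by
  simp [wordDist]

lemma exists_evalWord_eq (hgen : Subsemigroup.closure (Set.range φ) = ⊤) (g : G) :
    ∃ u : List A, evalWord φ u = g := by
  have hg : g ∈ Subsemigroup.closure (Set.range φ) := hgen ▸ Subsemigroup.mem_top g
  induction hg using Subsemigroup.closure_induction with
  | mem x hx =>
    obtain ⟨a, rfl⟩ := hx
    exact ⟨[a], by simp [evalWord]⟩
  | mul x y _ _ ihx ihy =>
    obtain ⟨u, rfl⟩ := ihx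
    obtain ⟨v, rfl⟩ := ihy
    exact ⟨u ++ v, evalWord_append φ u v⟩

lemma finite_setOf_wordDist_one_le [Finite A] (hgen : Subsemigroup.closure (Set.range φ) = ⊤)
    (k : ℕ) : {g : G | wordDist φ 1 g ≤ k}.Finite := by
  refine ((List.finite_length_le A k).image (evalWord φ)).subset fun g hg => ?_
  obtain ⟨u, hu⟩ := exists_evalWord_eq φ hgen g
  obtain ⟨v, hlen, hv⟩ := Nat.sInf_mem (s := {m | ∃ u : List A, u.length = m ∧
    evalWord φ u = 1⁻¹ * g}) ⟨u.length, u, rfl, by simp [hu]⟩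
  exact ⟨v, hlen.trans_le hg, by simpa using hv⟩

lemma DFA.append_flatten_replicate_append_mem_accepts {σ : Type*} (M : DFA A σ)
    {x y z : List A} (hloop : M.eval (x ++ y) = M.eval x) (hmem : x ++ y ++ z ∈ M.accepts)
    (m : ℕ) : x ++ (List.replicate m y).flatten ++ z ∈ M.accepts := by
  have hy : M.evalFrom (M.eval x) y = M.eval x := (M.evalFrom_of_append _ x y).symm.trans hloop
  have hpow : M.evalFrom (M.eval x) (List.replicate m y).flatten = M.eval x :=
    M.evalFrom_of_pow hy <| Language.mem_kstar.2
      ⟨_, rfl, fun v hv => by rw [List.eq_of_mem_replicate hv]; rfl⟩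
  rw [DFA.mem_accepts] at hmem ⊢
  simp only [DFA.eval, DFA.evalFrom_of_append] at hmem hpow hy ⊢
  rwa [hpow, ← hy]

lemma DFA.infinite_repr_of_loop {σ : Type*} (M : DFA A σ) {x y z : List A} (hy : y ≠ [])
    (hloop : M.eval (x ++ y) = M.eval x) (hval : evalWord φ y = 1)
    (hmem : x ++ y ++ z ∈ M.accepts) :
    {w : List A | w ∈ M.accepts ∧ evalWord φ w = evalWord φ (x ++ y ++ z)}.Infinite := by
  refine Set.infinite_of_injective_forall_mem
    (f := fun m => x ++ (List.replicate m y).flatten ++ z) (fun m₁ m₂ h => ?_)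
    fun m => ⟨M.append_flatten_replicate_append_mem_accepts hloop hmem m, ?_⟩
  · have hlen := congrArg List.length h
    simp only [List.length_append, List.length_flatten, List.map_replicate, List.sum_replicate,
      smul_eq_mul] at hlen
    exact Nat.eq_of_mul_eq_mul_right (List.length_pos_iff.2 hy) (by omega)
  · simp [evalWord_flatten_replicate φ hval, hval]

lemma DFA.infinite_repr_of_take_eq {σ : Type*} (M : DFA A σ) {w : List A}
    (hw : w ∈ M.accepts) {t₁ t₂ : ℕ} (h12 : t₁ < t₂) (h2 : t₂ ≤ w.length)
    (hval : evalWord φ (w.take t₁) = evalWord φ (w.take t₂))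
    (hstate : M.eval (w.take t₁) = M.eval (w.take t₂)) :
    {v : List A | v ∈ M.accepts ∧ evalWord φ v = evalWord φ w}.Infinite := by
  set y := (w.take t₂).drop t₁
  have hxy : w.take t₁ ++ y = w.take t₂ := by
    simpa [List.take_take, h12.le] using List.take_append_drop t₁ (w.take t₂)
  have hw' : w.take t₁ ++ y ++ w.drop t₂ = w := by rw [hxy, List.take_append_drop]
  have hy : y ≠ [] := by
    rw [← List.length_pos_iff, List.length_drop, List.length_take]
    omega
  have hy1 : evalWord φ y = 1 := by
    simpa [hval] using congrArg (evalWord φ) hxy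
  rw [← hw'] at hw ⊢
  exact M.infinite_repr_of_loop φ hy (hxy ▸ hstate.symm) hy1 hw

end Pumping

lemma Finset.exists_lt_map_eq_of_card_lt_of_maps_to {α β : Type*} [LinearOrder α]
    {s : Finset α} {t : Finset β} (hc : t.card < s.card) {f : α → β}
    (hf : ∀ a ∈ s, f a ∈ t) : ∃ a ∈ s, ∃ b ∈ s, a < b ∧ f a = f b := by
  obtain ⟨a, ha, b, hb, hne, hab⟩ := Finset.exists_ne_map_eq_of_card_lt_of_maps_to hc hf
  rcases hne.lt_or_gt with h | h
  · exact ⟨a, ha, b, hb, h, hab⟩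
  · exact ⟨b, hb, a, ha, h, hab.symm⟩

/-- Pumping argument inside a ball. Let `L` be accepted by a DFA `M` with `n` states and
suppose every element of `G` has only finitely many representatives in `L`.  Let `B` be the
number of group elements at word-metric distance at most `k` from the identity.
(i) If `w₂ ∈ L` and the subpath of `w₂` between times `t` and `t'` stays within distance `k`
of a fixed group element `g₀`, and there are two times in `[t, t']` at which the path visits
the same group element with the automaton in the same state, then `L` contains infinitely
many representatives of `π(w₂)`.
(ii) Consequently, for any `w₂ ∈ L`, any subsegment of `w₂` whose path stays in a ball of
radius `k` has length less than `n·B`. -/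
theorem pumping_in_ball {A G : Type*} [Fintype A] [Group G] (φ : A → G)
    (hgen : Subsemigroup.closure (Set.range φ) = ⊤)
    {σ : Type*} [Fintype σ] (M : DFA A σ) (n : ℕ) (hn : Fintype.card σ = n)
    (L : Language A) (hL : M.accepts = L)
    (hfin : ∀ g : G, {w : List A | w ∈ L ∧ evalWord φ w = g}.Finite)
    (k : ℕ) (B : ℕ) (hB : B = Set.ncard {g : G | wordDist φ 1 g ≤ k}) :
    (∀ w₂ ∈ L, ∀ g₀ : G, ∀ t t' : ℕ, t < t' → t' ≤ w₂.length →
      (∀ s : ℕ, t ≤ s → s ≤ t' → wordDist φ g₀ (evalWord φ (w₂.take s)) ≤ k) →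
      (∃ t₁ t₂ : ℕ, t ≤ t₁ ∧ t₁ < t₂ ∧ t₂ ≤ t' ∧
        evalWord φ (w₂.take t₁) = evalWord φ (w₂.take t₂) ∧
        M.eval (w₂.take t₁) = M.eval (w₂.take t₂)) →
      {w : List A | w ∈ L ∧ evalWord φ w = evalWord φ w₂}.Infinite) ∧
    (∀ w₂ ∈ L, ∀ g₀ : G, ∀ t t' : ℕ, t < t' → t' ≤ w₂.length →
      (∀ s : ℕ, t ≤ s → s ≤ t' → wordDist φ g₀ (evalWord φ (w₂.take s)) ≤ k) →
      t' - t < n * B) := by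
  subst hL
  refine ⟨fun w₂ hw₂ _ _ t' _ ht' _ ⟨t₁, t₂, _, h12, h2, hval, hstate⟩ =>
    M.infinite_repr_of_take_eq φ hw₂ h12 (h2.trans ht') hval hstate,
    fun w₂ hw₂ g₀ t t' _ ht' hball => ?_⟩
  by_contra! hlong
  have hball_fin := finite_setOf_wordDist_one_le φ hgen k
  obtain ⟨s₁, -, s₂, hs₂, h12, hF⟩ := Finset.exists_lt_map_eq_of_card_lt_of_maps_to
    (s := Finset.Icc t t') (t := hball_fin.toFinset ×ˢ Finset.univ)
    (f := fun s => (g₀⁻¹ * evalWord φ (w₂.take s), M.eval (w₂.take s)))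
    (by
      rw [Finset.card_product, Finset.card_univ, hn, ← Set.ncard_eq_toFinset_card _ hball_fin,
        ← hB, Nat.card_Icc]
      lia)
    (fun s hs => by
      rw [Finset.mem_Icc] at hs
      simpa [wordDist_one_inv_mul] using hball s hs.1 hs.2)
  rw [Finset.mem_Icc] at hs₂
  simp only [Prod.mk.injEq, mul_right_inj] at hF
  exact M.infinite_repr_of_take_eq φ hw₂ h12 (hs₂.2.trans ht') hF.1 hF.2 (hfin _)
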